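/- Let d ≥ 1 be an integer, α > 0, Λ ≥ 1, G ≥ 0, L ≥ 0, and let g : ℝ^d → ℝ satisfy |g(u)| ≤ G and |g(u) − g(v)| ≤ L|u − v| for all unit vectors u, v ∈ ℝ^d. Let σ_1, σ_2 be invertible d×d real matrices with operator norms ‖σ_i‖ ≤ Λ and ‖σ_i^{−1}‖ ≤ Λ for i = 1, 2. Then there exists a constant C, depending only on d, α, Λ, G and L, such that for every unit vector s ∈ ℝ^d: | g(σ_1^{−1}s / |σ_1^{−1}s|) / ( |σ_1^{−1}s|^{d+α} · det σ_1 ) − g(σ_2^{−1}s / |σ_2^{−1}s|) / ( |σ_2^{−1}s|^{d+α} · det σ_2 ) | ≤ C ‖σ_1 − σ_2‖. -/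

import Mathlib

/-- The action of a d×d matrix on the Euclidean space `ℝ^d`. -/
noncomputable def matAct (d : ℕ) (M : Matrix (Fin d) (Fin d) ℝ)
    (v : EuclideanSpace ℝ (Fin d)) : EuclideanSpace ℝ (Fin d) :=
  (EuclideanSpace.equiv (Fin d) ℝ).symm (M.mulVec ((EuclideanSpace.equiv (Fin d) ℝ) v))

/-- The operator norm of a d×d real matrix, acting on the Euclidean space `ℝ^d`. -/
noncomputable def matOpNorm (d : ℕ) (M : Matrix (Fin d) (Fin d) ℝ) : ℝ :=
  ‖(Matrix.toEuclideanLin M).toContinuousLinearMap‖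

/-!
Write `xᵢ = σᵢ⁻¹ s`. Ellipticity pins `|xᵢ|` to `[Λ⁻¹, Λ]` and, by Hadamard's inequality applied
to the columns of `σᵢ` and of `σᵢ⁻¹`, `|det σᵢ|` to `[Λ⁻ᵈ, Λᵈ]`; the resolvent identity
`σ₁⁻¹ - σ₂⁻¹ = σ₁⁻¹ (σ₂ - σ₁) σ₂⁻¹` gives `|x₁ - x₂| ≤ Λ² ‖σ₁ - σ₂‖`. On these ranges the
normalisation `x ↦ x / |x|`, the power `t ↦ tᵖ` and the determinant (multilinear in the columns)
are Lipschitz, so the numerators and the denominators of the two coefficients differ by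
`O(‖σ₁ - σ₂‖)`, while the denominators stay bounded away from zero.
-/

open Set Real
open scoped Matrix.Norms.L2Operator

section Rpow

variable {Λ t : ℝ}

lemma abs_log_le_log_of_mem_Icc (hΛ : 0 < Λ) (ht : t ∈ Icc Λ⁻¹ Λ) : |log t| ≤ log Λ := by
  have ht₀ : 0 < t := (inv_pos.2 hΛ).trans_le ht.1
  have hinv : -log Λ ≤ log t := by simpa only [log_inv] using log_le_log (inv_pos.2 hΛ) ht.1
  exact abs_le.2 ⟨hinv, log_le_log ht₀ ht.2⟩

lemma rpow_mem_Icc_of_mem_Icc (hΛ : 0 < Λ) (ht : t ∈ Icc Λ⁻¹ Λ) (q : ℝ) :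
    t ^ q ∈ Icc (Λ ^ |q|)⁻¹ (Λ ^ |q|) := by
  have ht₀ : 0 < t := (inv_pos.2 hΛ).trans_le ht.1
  have hlog : |log t * q| ≤ log Λ * |q| := by
    rw [abs_mul]
    exact mul_le_mul_of_nonneg_right (abs_log_le_log_of_mem_Icc hΛ ht) (abs_nonneg q)
  rw [rpow_def_of_pos ht₀, rpow_def_of_pos hΛ, ← exp_neg]
  exact ⟨exp_le_exp.2 (neg_le_of_abs_le hlog), exp_le_exp.2 (le_of_abs_le hlog)⟩

lemma abs_rpow_sub_rpow_le {a b : ℝ} (hΛ : 0 < Λ) (ha : a ∈ Icc Λ⁻¹ Λ) (hb : b ∈ Icc Λ⁻¹ Λ)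
    (p : ℝ) : |a ^ p - b ^ p| ≤ |p| * Λ ^ |p - 1| * |a - b| := by
  have hpos : ∀ x ∈ Icc Λ⁻¹ Λ, 0 < x := fun x hx ↦ (inv_pos.2 hΛ).trans_le hx.1
  have hderiv : ∀ x ∈ Icc Λ⁻¹ Λ, ‖deriv (fun t : ℝ ↦ t ^ p) x‖ ≤ |p| * Λ ^ |p - 1| := by
    intro x hx
    rw [Real.deriv_rpow_const, norm_mul, norm_of_nonneg (rpow_nonneg (hpos x hx).le _)]
    exact mul_le_mul_of_nonneg_left (rpow_mem_Icc_of_mem_Icc hΛ hx _).2 (abs_nonneg p)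
  simpa only [norm_eq_abs] using (convex_Icc Λ⁻¹ Λ).norm_image_sub_le_of_norm_deriv_le
    (fun x hx ↦ differentiableAt_rpow_const_of_ne p (hpos x hx).ne') hderiv hb ha

lemma abs_rpow_mul_sub_rpow_mul_le {a b D₁ D₂ K : ℝ} (hΛ : 0 < Λ) (ha : a ∈ Icc Λ⁻¹ Λ)
    (hb : b ∈ Icc Λ⁻¹ Λ) (hD₁ : |D₁| ≤ K) (p : ℝ) :
    |a ^ p * D₁ - b ^ p * D₂| ≤ |p| * Λ ^ |p - 1| * |a - b| * K + Λ ^ |p| * |D₁ - D₂| := by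
  have hb₀ : 0 ≤ b ^ p := (rpow_mem_Icc_of_mem_Icc hΛ hb p).1.trans' (by positivity)
  calc |a ^ p * D₁ - b ^ p * D₂| = |(a ^ p - b ^ p) * D₁ + b ^ p * (D₁ - D₂)| := by
        congr 1; ring
    _ ≤ |a ^ p - b ^ p| * |D₁| + b ^ p * |D₁ - D₂| := by
        rw [← abs_of_nonneg hb₀, ← abs_mul, ← abs_mul, abs_of_nonneg hb₀]
        exact abs_add_le _ _
    _ ≤ _ := by
        gcongr
        · exact abs_rpow_sub_rpow_le hΛ ha hb p
        · exact (rpow_mem_Icc_of_mem_Icc hΛ hb p).2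

end Rpow

section Determinant

variable {d : ℕ}

noncomputable def Matrix.euclideanCols (M : Matrix (Fin d) (Fin d) ℝ) :
    Fin d → EuclideanSpace ℝ (Fin d) :=
  fun j ↦ Matrix.toEuclideanCLM (𝕜 := ℝ) M (EuclideanSpace.basisFun (Fin d) ℝ j)

lemma Matrix.basisFun_det_euclideanCols (M : Matrix (Fin d) (Fin d) ℝ) :
    (EuclideanSpace.basisFun (Fin d) ℝ).toBasis.det M.euclideanCols = M.det := by
  rw [Module.Basis.det_apply]
  congr 1
  ext i j
  simp [Matrix.euclideanCols, Module.Basis.toMatrix_apply]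

lemma Matrix.euclideanCols_sub (M N : Matrix (Fin d) (Fin d) ℝ) :
    (M - N).euclideanCols = M.euclideanCols - N.euclideanCols := by
  ext1 j
  simp [Matrix.euclideanCols]

lemma Matrix.norm_euclideanCols_le (M : Matrix (Fin d) (Fin d) ℝ) : ‖M.euclideanCols‖ ≤ ‖M‖ := by
  refine (pi_norm_le_iff_of_nonneg (norm_nonneg M)).2 fun j ↦ ?_
  calc ‖M.euclideanCols j‖
      ≤ ‖Matrix.toEuclideanCLM (𝕜 := ℝ) M‖ * ‖EuclideanSpace.basisFun (Fin d) ℝ j‖ :=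
        (Matrix.toEuclideanCLM (𝕜 := ℝ) M).le_opNorm _
    _ = ‖M‖ := by rw [(EuclideanSpace.basisFun (Fin d) ℝ).orthonormal.1 j, mul_one]; rfl

/-- Hadamard's inequality. -/
lemma abs_basisFun_det_le_prod_norm (v : Fin d → EuclideanSpace ℝ (Fin d)) :
    |(EuclideanSpace.basisFun (Fin d) ℝ).toBasis.det v| ≤ ∏ i, ‖v i‖ := by
  have : Fact (Module.finrank ℝ (EuclideanSpace ℝ (Fin d)) = d) := ⟨finrank_euclideanSpace_fin⟩
  rw [← (EuclideanSpace.basisFun (Fin d) ℝ).toBasis.orientation.volumeForm_robust']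
  exact Orientation.abs_volumeForm_apply_le _ v

lemma Matrix.abs_det_le_norm_pow (M : Matrix (Fin d) (Fin d) ℝ) : |M.det| ≤ ‖M‖ ^ d := by
  rw [← M.basisFun_det_euclideanCols]
  refine (abs_basisFun_det_le_prod_norm _).trans ?_
  calc ∏ j, ‖M.euclideanCols j‖ ≤ ∏ _j : Fin d, ‖M‖ :=
        Finset.prod_le_prod (fun j _ ↦ norm_nonneg _)
          fun j _ ↦ (norm_le_pi_norm M.euclideanCols j).trans M.norm_euclideanCols_le
    _ = ‖M‖ ^ d := by simp

lemma Matrix.abs_det_sub_det_le (M N : Matrix (Fin d) (Fin d) ℝ) :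
    |M.det - N.det| ≤ d * max ‖M‖ ‖N‖ ^ (d - 1) * ‖M - N‖ := by
  have h := (EuclideanSpace.basisFun (Fin d) ℝ).toBasis.det.norm_image_sub_le_of_bound zero_le_one
    (fun v ↦ by simpa using abs_basisFun_det_le_prod_norm v) M.euclideanCols N.euclideanCols
  rw [M.basisFun_det_euclideanCols, N.basisFun_det_euclideanCols, ← Matrix.euclideanCols_sub,
    Fintype.card_fin, one_mul, norm_eq_abs] at h
  refine h.trans ?_
  gcongr <;> exact Matrix.norm_euclideanCols_le _

end Determinant

section Normalize

variable {E : Type*} [NormedAddCommGroup E] [NormedSpace ℝ E]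

lemma norm_inv_norm_smul {a : E} (ha : a ≠ 0) : ‖‖a‖⁻¹ • a‖ = 1 := by
  rw [norm_smul, norm_inv, norm_norm, inv_mul_cancel₀ (norm_ne_zero_iff.2 ha)]

lemma norm_inv_norm_smul_sub_inv_norm_smul_le {a b : E} (ha : a ≠ 0) (hb : b ≠ 0) :
    ‖‖a‖⁻¹ • a - ‖b‖⁻¹ • b‖ ≤ 2 * ‖a - b‖ / ‖a‖ := by
  have ha₀ : 0 < ‖a‖ := norm_pos_iff.2 ha
  have hb₀ : ‖b‖ ≠ 0 := norm_ne_zero_iff.2 hb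
  have hsplit : ‖a‖⁻¹ • a - ‖b‖⁻¹ • b = ‖a‖⁻¹ • ((a - b) + (‖b‖ - ‖a‖) • (‖b‖⁻¹ • b)) := by
    rw [smul_smul, sub_mul, mul_inv_cancel₀ hb₀, smul_add, smul_smul, mul_sub, mul_one,
      ← mul_assoc, inv_mul_cancel₀ ha₀.ne', one_mul]
    module
  rw [hsplit, norm_smul, norm_inv, norm_norm, inv_mul_eq_div]
  gcongr
  calc ‖a - b + (‖b‖ - ‖a‖) • (‖b‖⁻¹ • b)‖ ≤ ‖a - b‖ + |‖b‖ - ‖a‖| := by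
        refine (norm_add_le _ _).trans_eq ?_
        rw [norm_smul, norm_inv_norm_smul hb, mul_one, Real.norm_eq_abs]
    _ ≤ 2 * ‖a - b‖ := by linarith [abs_norm_sub_norm_le b a, norm_sub_rev a b]

end Normalize

lemma abs_div_sub_div_le {a₁ a₂ b₁ b₂ m G : ℝ} (hm : 0 < m) (hb₁ : m ≤ |b₁|) (hb₂ : m ≤ |b₂|)
    (ha₂ : |a₂| ≤ G) : |a₁ / b₁ - a₂ / b₂| ≤ |a₁ - a₂| / m + G * |b₁ - b₂| / m ^ 2 := by
  have hb₁₀ : b₁ ≠ 0 := abs_pos.1 (hm.trans_le hb₁)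
  have hb₂₀ : b₂ ≠ 0 := abs_pos.1 (hm.trans_le hb₂)
  have hG : 0 ≤ G := (abs_nonneg a₂).trans ha₂
  have hsplit : a₁ / b₁ - a₂ / b₂ = (a₁ - a₂) / b₁ + a₂ * (b₂ - b₁) / (b₁ * b₂) := by
    field_simp
    ring
  calc |a₁ / b₁ - a₂ / b₂| ≤ |a₁ - a₂| / |b₁| + |a₂| * |b₁ - b₂| / (|b₁| * |b₂|) := by
        rw [hsplit, abs_sub_comm b₁, ← abs_mul, ← abs_mul, ← abs_div, ← abs_div]
        exact abs_add_le _ _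
    _ ≤ |a₁ - a₂| / m + G * |b₁ - b₂| / m ^ 2 := by
        rw [sq]
        gcongr

section Ellipticity

variable {d : ℕ} {Λ : ℝ} {σ σ₁ σ₂ : Matrix (Fin d) (Fin d) ℝ} {s : EuclideanSpace ℝ (Fin d)}

lemma matOpNorm_eq_norm (M : Matrix (Fin d) (Fin d) ℝ) : matOpNorm d M = ‖M‖ := rfl

lemma matAct_eq_toEuclideanCLM (M : Matrix (Fin d) (Fin d) ℝ) :
    matAct d M = Matrix.toEuclideanCLM (𝕜 := ℝ) M := rfl

lemma norm_matAct_le (M : Matrix (Fin d) (Fin d) ℝ) (v : EuclideanSpace ℝ (Fin d)) :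
    ‖matAct d M v‖ ≤ ‖M‖ * ‖v‖ :=
  M.l2_opNorm_mulVec v

lemma matAct_sub (A B : Matrix (Fin d) (Fin d) ℝ) (v : EuclideanSpace ℝ (Fin d)) :
    matAct d (A - B) v = matAct d A v - matAct d B v := by
  simp [matAct_eq_toEuclideanCLM]

lemma matAct_matAct_inv (hσ : IsUnit σ) (v : EuclideanSpace ℝ (Fin d)) :
    matAct d σ (matAct d σ⁻¹ v) = v := by
  calc matAct d σ (matAct d σ⁻¹ v) = matAct d (σ * σ⁻¹) v := by simp [matAct_eq_toEuclideanCLM]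
    _ = v := by
      rw [Matrix.mul_nonsing_inv _ ((Matrix.isUnit_iff_isUnit_det σ).1 hσ)]
      simp [matAct_eq_toEuclideanCLM]

lemma Matrix.norm_inv_sub_inv_le (h₁ : IsUnit σ₁) (h₂ : IsUnit σ₂) :
    ‖σ₁⁻¹ - σ₂⁻¹‖ ≤ ‖σ₁⁻¹‖ * ‖σ₁ - σ₂‖ * ‖σ₂⁻¹‖ := by
  rw [Matrix.inv_sub_inv (iff_of_true h₁ h₂), norm_sub_rev σ₁]
  exact norm_mul₃_le

lemma norm_matAct_inv_mem_Icc (hσ : IsUnit σ) (h : ‖σ‖ ≤ Λ) (h' : ‖σ⁻¹‖ ≤ Λ) (hs : ‖s‖ = 1) :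
    ‖matAct d σ⁻¹ s‖ ∈ Icc Λ⁻¹ Λ := by
  have hupper : ‖matAct d σ⁻¹ s‖ ≤ Λ := by
    simpa [hs] using (norm_matAct_le σ⁻¹ s).trans (mul_le_mul_of_nonneg_right h' (norm_nonneg s))
  have hlower : 1 ≤ Λ * ‖matAct d σ⁻¹ s‖ := by
    calc (1 : ℝ) = ‖matAct d σ (matAct d σ⁻¹ s)‖ := by rw [matAct_matAct_inv hσ, hs]
      _ ≤ ‖σ‖ * ‖matAct d σ⁻¹ s‖ := norm_matAct_le _ _
      _ ≤ Λ * ‖matAct d σ⁻¹ s‖ := by gcongr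
  have hΛ : 0 < Λ := pos_of_mul_pos_left (one_pos.trans_le hlower) (norm_nonneg _)
  exact ⟨(inv_le_iff_one_le_mul₀' hΛ).2 hlower, hupper⟩

lemma norm_matAct_inv_sub_matAct_inv_le (h₁ : IsUnit σ₁) (h₂ : IsUnit σ₂) (h₁' : ‖σ₁⁻¹‖ ≤ Λ)
    (h₂' : ‖σ₂⁻¹‖ ≤ Λ) (hs : ‖s‖ = 1) :
    ‖matAct d σ₁⁻¹ s - matAct d σ₂⁻¹ s‖ ≤ Λ ^ 2 * ‖σ₁ - σ₂‖ := by
  have hΛ : 0 ≤ Λ := (norm_nonneg _).trans h₁'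
  rw [← matAct_sub]
  calc ‖matAct d (σ₁⁻¹ - σ₂⁻¹) s‖ ≤ ‖σ₁⁻¹ - σ₂⁻¹‖ := by simpa [hs] using norm_matAct_le _ s
    _ ≤ ‖σ₁⁻¹‖ * ‖σ₁ - σ₂‖ * ‖σ₂⁻¹‖ := Matrix.norm_inv_sub_inv_le h₁ h₂
    _ ≤ Λ * ‖σ₁ - σ₂‖ * Λ := by gcongr
    _ = Λ ^ 2 * ‖σ₁ - σ₂‖ := by ring

lemma inv_pow_le_abs_det (hσ : IsUnit σ) (h' : ‖σ⁻¹‖ ≤ Λ) : (Λ ^ d)⁻¹ ≤ |σ.det| := by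
  have hdet : σ.det * σ⁻¹.det = 1 := by
    rw [← Matrix.det_mul, Matrix.mul_nonsing_inv _ ((Matrix.isUnit_iff_isUnit_det σ).1 hσ),
      Matrix.det_one]
  have hinv : |σ⁻¹.det| ≤ Λ ^ d :=
    σ⁻¹.abs_det_le_norm_pow.trans (pow_le_pow_left₀ (norm_nonneg _) h' d)
  rw [eq_inv_of_mul_eq_one_left hdet, abs_inv]
  exact inv_anti₀ (abs_pos.2 (right_ne_zero_of_mul_eq_one hdet)) hinv

lemma norm_matAct_inv_pos (hΛ : 0 < Λ) (hσ : IsUnit σ) (h : ‖σ‖ ≤ Λ) (h' : ‖σ⁻¹‖ ≤ Λ)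
    (hs : ‖s‖ = 1) : 0 < ‖matAct d σ⁻¹ s‖ :=
  (inv_pos.2 hΛ).trans_le (norm_matAct_inv_mem_Icc hσ h h' hs).1

lemma norm_inv_norm_smul_matAct_inv_sub_le (hΛ : 0 < Λ) (h₁ : IsUnit σ₁) (h₂ : IsUnit σ₂)
    (hσ₁ : ‖σ₁‖ ≤ Λ) (h₁' : ‖σ₁⁻¹‖ ≤ Λ) (hσ₂ : ‖σ₂‖ ≤ Λ) (h₂' : ‖σ₂⁻¹‖ ≤ Λ) (hs : ‖s‖ = 1) :
    ‖‖matAct d σ₁⁻¹ s‖⁻¹ • matAct d σ₁⁻¹ s - ‖matAct d σ₂⁻¹ s‖⁻¹ • matAct d σ₂⁻¹ s‖ ≤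
      2 * Λ ^ 3 * ‖σ₁ - σ₂‖ := by
  calc _ ≤ 2 * ‖matAct d σ₁⁻¹ s - matAct d σ₂⁻¹ s‖ / ‖matAct d σ₁⁻¹ s‖ :=
        norm_inv_norm_smul_sub_inv_norm_smul_le
          (norm_pos_iff.1 (norm_matAct_inv_pos hΛ h₁ hσ₁ h₁' hs))
          (norm_pos_iff.1 (norm_matAct_inv_pos hΛ h₂ hσ₂ h₂' hs))
    _ ≤ 2 * (Λ ^ 2 * ‖σ₁ - σ₂‖) / Λ⁻¹ := by
        gcongr
        · exact norm_matAct_inv_sub_matAct_inv_le h₁ h₂ h₁' h₂' hs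
        · exact (norm_matAct_inv_mem_Icc h₁ hσ₁ h₁' hs).1
    _ = 2 * Λ ^ 3 * ‖σ₁ - σ₂‖ := by field_simp

lemma inv_le_abs_rpow_mul_det (hΛ : 0 < Λ) (hσ : IsUnit σ) (h : ‖σ‖ ≤ Λ) (h' : ‖σ⁻¹‖ ≤ Λ)
    (hs : ‖s‖ = 1) (p : ℝ) : (Λ ^ |p| * Λ ^ d)⁻¹ ≤ |‖matAct d σ⁻¹ s‖ ^ p * σ.det| := by
  have hx := norm_matAct_inv_mem_Icc hσ h h' hs
  rw [abs_mul, abs_of_nonneg (rpow_nonneg (norm_nonneg _) p), mul_inv]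
  exact mul_le_mul (rpow_mem_Icc_of_mem_Icc hΛ hx p).1 (inv_pow_le_abs_det hσ h')
    (by positivity) (rpow_nonneg (norm_nonneg _) p)

lemma abs_rpow_mul_det_sub_le (hΛ : 0 < Λ) (h₁ : IsUnit σ₁) (h₂ : IsUnit σ₂) (hσ₁ : ‖σ₁‖ ≤ Λ)
    (h₁' : ‖σ₁⁻¹‖ ≤ Λ) (hσ₂ : ‖σ₂‖ ≤ Λ) (h₂' : ‖σ₂⁻¹‖ ≤ Λ) (hs : ‖s‖ = 1) (p : ℝ) :
    |‖matAct d σ₁⁻¹ s‖ ^ p * σ₁.det - ‖matAct d σ₂⁻¹ s‖ ^ p * σ₂.det| ≤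
      (|p| * Λ ^ |p - 1| * Λ ^ 2 * Λ ^ d + Λ ^ |p| * (d * Λ ^ (d - 1))) * ‖σ₁ - σ₂‖ := by
  have hx₁ := norm_matAct_inv_mem_Icc h₁ hσ₁ h₁' hs
  have hx₂ := norm_matAct_inv_mem_Icc h₂ hσ₂ h₂' hs
  have hdet₁ : |σ₁.det| ≤ Λ ^ d :=
    σ₁.abs_det_le_norm_pow.trans (pow_le_pow_left₀ (norm_nonneg _) hσ₁ d)
  calc _ ≤ |p| * Λ ^ |p - 1| * |‖matAct d σ₁⁻¹ s‖ - ‖matAct d σ₂⁻¹ s‖| * Λ ^ d +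
        Λ ^ |p| * |σ₁.det - σ₂.det| := abs_rpow_mul_sub_rpow_mul_le hΛ hx₁ hx₂ hdet₁ p
    _ ≤ |p| * Λ ^ |p - 1| * (Λ ^ 2 * ‖σ₁ - σ₂‖) * Λ ^ d +
        Λ ^ |p| * (d * Λ ^ (d - 1) * ‖σ₁ - σ₂‖) := by
      gcongr
      · exact (abs_norm_sub_norm_le _ _).trans
          (norm_matAct_inv_sub_matAct_inv_le h₁ h₂ h₁' h₂' hs)
      · exact (σ₁.abs_det_sub_det_le σ₂).trans (by gcongr; exact max_le hσ₁ hσ₂)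
    _ = _ := by ring

end Ellipticity

theorem kernel_coefficient_lipschitz_general (d : ℕ)
    (α Λ G L : ℝ) (hΛ : 1 ≤ Λ) (hG : 0 ≤ G) (hL : 0 ≤ L) :
    ∃ C : ℝ, 0 < C ∧
      ∀ g : EuclideanSpace ℝ (Fin d) → ℝ,
        (∀ u : EuclideanSpace ℝ (Fin d), ‖u‖ = 1 → |g u| ≤ G) →
        (∀ u v : EuclideanSpace ℝ (Fin d), ‖u‖ = 1 → ‖v‖ = 1 →
          |g u - g v| ≤ L * ‖u - v‖) →
      ∀ σ₁ σ₂ : Matrix (Fin d) (Fin d) ℝ, IsUnit σ₁ → IsUnit σ₂ →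
        matOpNorm d σ₁ ≤ Λ → matOpNorm d σ₁⁻¹ ≤ Λ →
        matOpNorm d σ₂ ≤ Λ → matOpNorm d σ₂⁻¹ ≤ Λ →
      ∀ s : EuclideanSpace ℝ (Fin d), ‖s‖ = 1 →
        |g (‖matAct d σ₁⁻¹ s‖⁻¹ • matAct d σ₁⁻¹ s) /
            (‖matAct d σ₁⁻¹ s‖ ^ ((d : ℝ) + α) * σ₁.det) -
          g (‖matAct d σ₂⁻¹ s‖⁻¹ • matAct d σ₂⁻¹ s) /
            (‖matAct d σ₂⁻¹ s‖ ^ ((d : ℝ) + α) * σ₂.det)| ≤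
          C * matOpNorm d (σ₁ - σ₂) := by
  have hΛ₀ : 0 < Λ := one_pos.trans_le hΛ
  set p := (d : ℝ) + α
  set m := (Λ ^ |p| * Λ ^ d)⁻¹
  set K := |p| * Λ ^ |p - 1| * Λ ^ 2 * Λ ^ d + Λ ^ |p| * (d * Λ ^ (d - 1))
  refine ⟨2 * L * Λ ^ 3 / m + G * K / m ^ 2 + 1, by positivity, ?_⟩
  intro g hgG hgL σ₁ σ₂ h₁ h₂ hσ₁ h₁' hσ₂ h₂' s hs
  simp only [matOpNorm_eq_norm] at *
  have hm : 0 < m := by positivity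
  have hu₁ := norm_inv_norm_smul (norm_pos_iff.1 (norm_matAct_inv_pos hΛ₀ h₁ hσ₁ h₁' hs))
  have hu₂ := norm_inv_norm_smul (norm_pos_iff.1 (norm_matAct_inv_pos hΛ₀ h₂ hσ₂ h₂' hs))
  have hnum := (hgL _ _ hu₁ hu₂).trans (mul_le_mul_of_nonneg_left
    (norm_inv_norm_smul_matAct_inv_sub_le hΛ₀ h₁ h₂ hσ₁ h₁' hσ₂ h₂' hs) hL)
  calc _ ≤ _ := abs_div_sub_div_le hm (inv_le_abs_rpow_mul_det hΛ₀ h₁ hσ₁ h₁' hs p)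
        (inv_le_abs_rpow_mul_det hΛ₀ h₂ hσ₂ h₂' hs p) (hgG _ hu₂)
    _ ≤ L * (2 * Λ ^ 3 * ‖σ₁ - σ₂‖) / m + G * (K * ‖σ₁ - σ₂‖) / m ^ 2 := by
        gcongr
        exact abs_rpow_mul_det_sub_le hΛ₀ h₁ h₂ hσ₁ h₁' hσ₂ h₂' hs p
    _ = (2 * L * Λ ^ 3 / m + G * K / m ^ 2) * ‖σ₁ - σ₂‖ := by ring
    _ ≤ _ := mul_le_mul_of_nonneg_right (le_add_of_nonneg_right zero_le_one) (norm_nonneg _)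

/-- Lipschitz comparison of the stable-like jump kernel coefficients associated with two
elliptic diffusion matrices: for `g` bounded and Lipschitz on the unit sphere and `σ₁, σ₂`
invertible with `‖σᵢ‖, ‖σᵢ⁻¹‖ ≤ Λ`, the difference of
`g(σᵢ⁻¹s/|σᵢ⁻¹s|) / (|σᵢ⁻¹s|^{d+α} det σᵢ)` is bounded by `C ‖σ₁ - σ₂‖` uniformly over unit
vectors `s`, with `C` depending only on `d, α, Λ, G, L`. -/
theorem kernel_coefficient_lipschitz (d : ℕ) (hd : 1 ≤ d)
    (α Λ G L : ℝ) (hα : 0 < α) (hΛ : 1 ≤ Λ) (hG : 0 ≤ G) (hL : 0 ≤ L) :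
    ∃ C : ℝ, 0 < C ∧
      ∀ g : EuclideanSpace ℝ (Fin d) → ℝ,
        (∀ u : EuclideanSpace ℝ (Fin d), ‖u‖ = 1 → |g u| ≤ G) →
        (∀ u v : EuclideanSpace ℝ (Fin d), ‖u‖ = 1 → ‖v‖ = 1 →
          |g u - g v| ≤ L * ‖u - v‖) →
      ∀ σ₁ σ₂ : Matrix (Fin d) (Fin d) ℝ, IsUnit σ₁ → IsUnit σ₂ →
        matOpNorm d σ₁ ≤ Λ → matOpNorm d σ₁⁻¹ ≤ Λ →
        matOpNorm d σ₂ ≤ Λ → matOpNorm d σ₂⁻¹ ≤ Λ →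
      ∀ s : EuclideanSpace ℝ (Fin d), ‖s‖ = 1 →
        |g (‖matAct d σ₁⁻¹ s‖⁻¹ • matAct d σ₁⁻¹ s) /
            (‖matAct d σ₁⁻¹ s‖ ^ ((d : ℝ) + α) * σ₁.det) -
          g (‖matAct d σ₂⁻¹ s‖⁻¹ • matAct d σ₂⁻¹ s) /
            (‖matAct d σ₂⁻¹ s‖ ^ ((d : ℝ) + α) * σ₂.det)| ≤
          C * matOpNorm d (σ₁ - σ₂) :=
  kernel_coefficient_lipschitz_general d α Λ G L hΛ hG hL
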